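/- For every smooth divergence-free vector field u : 𝕋³ → ℝ³ with zero spatial mean, there exists a smooth matrix field A : 𝕋³ → ℝ^{3×3} such that A(x) is skew-symmetric for every x, and div A = u pointwise (i.e., ∂_j A_{ji} = u_i for i = 1,2,3). -/

import Mathlib

open MeasureTheory Real Set ENNReal
set_option synthInstance.maxHeartbeats 1000000
set_option maxHeartbeats 1000000
set_option linter.unusedSectionVars false
set_option linter.unusedVariables false
set_option linter.unusedTactic false

noncomputable section

/-- Points of space; functions on the torus `𝕋³ = ℝ³/ℤ³` are modelled as
`ℤ³`-periodic functions on `ℝ³`. -/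
abbrev V3 := Fin 3 → ℝ

/-- `3 × 3` real matrices (as plain functions). -/
abbrev Mat3 := Fin 3 → Fin 3 → ℝ

/-- A fundamental domain for the torus. -/
def cube : Set V3 := Set.Icc 0 1

/-- `ℤ³`-periodicity: a function on `ℝ³` descends to the torus. -/
def SpacePeriodic {E : Type*} (f : V3 → E) : Prop :=
  ∀ (x : V3) (n : Fin 3 → ℤ), f (x + fun i => (n i : ℝ)) = f x

/-- Partial derivative `∂ᵢ f`. -/
def pd (i : Fin 3) (f : V3 → ℝ) (x : V3) : ℝ := fderiv ℝ f x (Pi.single i 1)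

/-- Divergence of a vector field. -/
def divV (v : V3 → V3) (x : V3) : ℝ := ∑ i, pd i (fun y => v y i) x

/-- Divergence of a matrix field: `(div M)_i = ∂_j M_{ji}`. -/
def divM (M : V3 → Mat3) (x : V3) (i : Fin 3) : ℝ := ∑ j, pd j (fun y => M y j i) x


-- update is smooth jointly
lemma contDiff_update2 (k : Fin 3) :
    ContDiff ℝ (⊤:ℕ∞) (fun p : V3 × ℝ => Function.update p.1 k p.2) := by
  rw [contDiff_pi]
  intro j
  rcases eq_or_ne j k with h | h
  · subst h
    have : (fun p : V3 × ℝ => Function.update p.1 j p.2 j) = fun p => p.2 := by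
      funext p; simp
    rw [this]; exact contDiff_snd
  · have : (fun p : V3 × ℝ => Function.update p.1 k p.2 j) = fun p => p.1 j := by
      funext p; simp [Function.update_of_ne h]
    rw [this]
    exact contDiff_pi.mp contDiff_fst j

lemma contDiff_update_comp {f : V3 → ℝ} (hf : ContDiff ℝ (⊤:ℕ∞) f) (k : Fin 3) (c : ℝ) :
    ContDiff ℝ (⊤:ℕ∞) (fun x => f (Function.update x k c)) :=
  hf.comp ((contDiff_update2 k).comp (contDiff_id.prodMk contDiff_const))

-- derivative of the coordinate line
lemma hasDerivAt_updLine (x : V3) (k : Fin 3) (t : ℝ) :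
    HasDerivAt (fun s => Function.update x k s) (Pi.single k 1 : V3) t := by
  rw [hasDerivAt_pi]
  intro j
  rcases eq_or_ne j k with h | h
  · subst h
    simpa using (hasDerivAt_id' t)
  · have : (fun s : ℝ => Function.update x k s j) = fun _ => x j := by
      funext s; simp [Function.update_of_ne h]
    rw [this]
    simpa [Pi.single_eq_of_ne h] using (hasDerivAt_const t (x j))

lemma hasDerivAt_comp_update {f : V3 → ℝ} {x : V3} {k : Fin 3} {t : ℝ}
    (hf : DifferentiableAt ℝ f (Function.update x k t)) :
    HasDerivAt (fun s => f (Function.update x k s)) (pd k f (Function.update x k t)) t :=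
  hf.hasFDerivAt.comp_hasDerivAt t (hasDerivAt_updLine x k t)

lemma pd_eq_deriv {f : V3 → ℝ} (x : V3) (k : Fin 3) (hf : DifferentiableAt ℝ f x) :
    pd k f x = deriv (fun t => f (Function.update x k t)) (x k) := by
  have h : HasDerivAt (fun s => f (Function.update x k s)) (pd k f x) (x k) := by
    have := hasDerivAt_comp_update (x := x) (k := k) (t := x k)
      (by rwa [Function.update_eq_self])
    rwa [Function.update_eq_self] at this
  exact (h.deriv).symm

section Param
variable {E : Type*} [NormedAddCommGroup E] [NormedSpace ℝ E] [CompleteSpace E]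

lemma contDiff_partial_fderiv {F : V3 × ℝ → E} (hF : ContDiff ℝ (⊤:ℕ∞) F) :
    ContDiff ℝ (⊤:ℕ∞) (fun p : V3 × ℝ => fderiv ℝ (fun y => F (y, p.2)) p.1) := by
  apply ContDiff.fderiv (f := fun (p : V3 × ℝ) (y : V3) => F (y, p.2))
    (g := fun p : V3 × ℝ => p.1) (m := ((⊤:ℕ∞) : WithTop ℕ∞))
  · exact hF.comp (contDiff_snd.prodMk (contDiff_snd.comp contDiff_fst))
  · exact contDiff_fst
  · exact le_of_eq (by simp)

lemma param_hasFDerivAt {F : V3 × ℝ → E} (hF : ContDiff ℝ (⊤:ℕ∞) F) (x₀ : V3) :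
    HasFDerivAt (fun x => ∫ s in (0:ℝ)..1, F (x, s))
      (∫ s in (0:ℝ)..1, fderiv ℝ (fun y => F (y, s)) x₀) x₀ := by
  have hG : ContDiff ℝ (⊤:ℕ∞) (fun p : V3 × ℝ => fderiv ℝ (fun y => F (y, p.2)) p.1) :=
    contDiff_partial_fderiv hF
  have hGcont := hG.continuous
  obtain ⟨C, hC⟩ := (((isCompact_closedBall x₀ 1).prod (isCompact_Icc (a := (0:ℝ))
      (b := 1)))).exists_bound_of_continuousOn hGcont.continuousOn
  have key := intervalIntegral.hasFDerivAt_integral_of_dominated_of_fderiv_le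
    (μ := volume) (F := fun (x : V3) (s : ℝ) => F (x, s))
    (F' := fun (x : V3) (s : ℝ) => fderiv ℝ (fun y => F (y, s)) x)
    (x₀ := x₀) (a := 0) (b := 1) (bound := fun _ => C) (s := Metric.ball x₀ 1) (Metric.ball_mem_nhds x₀ one_pos)
    ?_ ?_ ?_ ?_ ?_ ?_
  · exact key
  · filter_upwards with x
    exact (hF.continuous.comp (continuous_const.prodMk continuous_id)).aestronglyMeasurable
  · exact (hF.continuous.comp (continuous_const.prodMk continuous_id)).intervalIntegrable 0 1
  · exact (hGcont.comp (continuous_const.prodMk continuous_id)).aestronglyMeasurable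
  · filter_upwards with t ht x hx
    have ht' : t ∈ Icc (0:ℝ) 1 := by
      rw [uIoc_of_le (by norm_num : (0:ℝ) ≤ 1)] at ht
      exact Ioc_subset_Icc_self ht
    exact hC (x, t) ⟨Metric.ball_subset_closedBall hx, ht'⟩
  · exact intervalIntegrable_const
  · filter_upwards with t ht x hx
    exact ((hF.comp (contDiff_id.prodMk contDiff_const)).differentiable (by simp) x).hasFDerivAt

lemma param_contDiff_nat : ∀ (n : ℕ) {E : Type*} [NormedAddCommGroup E] [NormedSpace ℝ E]
    [CompleteSpace E] (F : V3 × ℝ → E), ContDiff ℝ (⊤:ℕ∞) F →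
    ContDiff ℝ (n:ℕ) (fun x => ∫ s in (0:ℝ)..1, F (x, s))
  | 0, E, _, _, _, F, hF => by
    rw [show (((0:ℕ)):WithTop ℕ∞) = 0 by norm_cast, contDiff_zero]
    exact intervalIntegral.continuous_parametric_intervalIntegral_of_continuous
      (f := fun (x : V3) (s : ℝ) => F (x, s)) (by exact hF.continuous) continuous_const
  | (n+1), E, _, _, _, F, hF => by
    have key := param_hasFDerivAt hF
    rw [show (((n+1:ℕ)):WithTop ℕ∞) = ((n:ℕ):WithTop ℕ∞) + 1 by push_cast; ring,
      contDiff_succ_iff_fderiv]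
    refine ⟨fun x => (key x).differentiableAt, by simp, ?_⟩
    have heq : (fderiv ℝ fun x => ∫ s in (0:ℝ)..1, F (x, s))
        = fun x => ∫ s in (0:ℝ)..1, fderiv ℝ (fun y => F (y, s)) x := by
      funext x; exact (key x).fderiv
    rw [heq]
    exact param_contDiff_nat n (fun p => fderiv ℝ (fun y => F (y, p.2)) p.1)
      (contDiff_partial_fderiv hF)

lemma param_contDiff {F : V3 × ℝ → E} (hF : ContDiff ℝ (⊤:ℕ∞) F) :
    ContDiff ℝ (⊤:ℕ∞) (fun x => ∫ s in (0:ℝ)..1, F (x, s)) := by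
  rw [contDiff_infty]
  intro n; exact param_contDiff_nat n F hF

end Param

def Sk (k : Fin 3) (f : V3 → ℝ) (x : V3) : ℝ := ∫ t in (0:ℝ)..(x k), f (Function.update x k t)
def Mk (k : Fin 3) (f : V3 → ℝ) (x : V3) : ℝ := ∫ t in (0:ℝ)..1, f (Function.update x k t)

lemma coordCD (k : Fin 3) : ContDiff ℝ (⊤:ℕ∞) (fun x : V3 => x k) := contDiff_pi.mp contDiff_id k

lemma Mk_contDiff {f : V3 → ℝ} (hf : ContDiff ℝ (⊤:ℕ∞) f) (k : Fin 3) :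
    ContDiff ℝ (⊤:ℕ∞) (Mk k f) :=
  param_contDiff (hf.comp (contDiff_update2 k))

lemma Sk_eq (k : Fin 3) (f : V3 → ℝ) (x : V3) :
    Sk k f x = (x k) • ∫ s in (0:ℝ)..1, f (Function.update x k ((x k) * s)) := by
  rw [Sk, show ∀ b:ℝ, (∫ t in (0:ℝ)..b, f (Function.update x k t))
    = ∫ t in (b*0)..(b*1), f (Function.update x k t) by intro b; norm_num]
  rw [← intervalIntegral.smul_integral_comp_mul_left (fun t => f (Function.update x k t)) (x k)]

lemma Sk_contDiff {f : V3 → ℝ} (hf : ContDiff ℝ (⊤:ℕ∞) f) (k : Fin 3) :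
    ContDiff ℝ (⊤:ℕ∞) (Sk k f) := by
  have : Sk k f = fun x => (x k) • ∫ s in (0:ℝ)..1,
      (fun p : V3 × ℝ => f (Function.update p.1 k ((p.1 k) * p.2))) (x, s) := by
    funext x; exact Sk_eq k f x
  rw [this]
  apply (coordCD k).smul
  apply param_contDiff (F := fun p : V3 × ℝ => f (Function.update p.1 k ((p.1 k) * p.2)))
  exact hf.comp ((contDiff_update2 k).comp (contDiff_fst.prodMk
    (((coordCD k).comp contDiff_fst).mul contDiff_snd)))
-- pd arithmetic
lemma pd_add {f g : V3 → ℝ} {x : V3} (i : Fin 3) (hf : DifferentiableAt ℝ f x)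
    (hg : DifferentiableAt ℝ g x) :
    pd i (fun y => f y + g y) x = pd i f x + pd i g x := by
  simp only [pd]; rw [fderiv_fun_add hf hg]; rfl

lemma pd_sub {f g : V3 → ℝ} {x : V3} (i : Fin 3) (hf : DifferentiableAt ℝ f x)
    (hg : DifferentiableAt ℝ g x) :
    pd i (fun y => f y - g y) x = pd i f x - pd i g x := by
  simp only [pd]; rw [fderiv_fun_sub hf hg]; rfl

lemma pd_neg {f : V3 → ℝ} {x : V3} (i : Fin 3) :
    pd i (fun y => -f y) x = - pd i f x := by
  simp only [pd]; rw [fderiv_fun_neg]; rfl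

lemma pd_const {x : V3} (i : Fin 3) (c : ℝ) : pd i (fun _ => c) x = 0 := by
  simp [pd]

lemma pd_contDiff {f : V3 → ℝ} (hf : ContDiff ℝ (⊤:ℕ∞) f) (i : Fin 3) :
    ContDiff ℝ (⊤:ℕ∞) (pd i f) := by
  have : pd i f = fun x => (fderiv ℝ f x) (Pi.single i 1) := rfl
  rw [this]
  exact (hf.fderiv_right (le_of_eq (by simp))).clm_apply contDiff_const

lemma one_le_inf : ((⊤:ℕ∞) : WithTop ℕ∞) ≠ 0 := by simp

lemma cont_comp_update {f : V3 → ℝ} (hf : Continuous f) (x : V3) (k : Fin 3) :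
    Continuous (fun s : ℝ => f (Function.update x k s)) :=
  hf.comp ((contDiff_update2 k).continuous.comp (continuous_const.prodMk continuous_id))

-- FTC I : pd k (Sk k f) = f
lemma pd_Sk_self {f : V3 → ℝ} (hf : ContDiff ℝ (⊤:ℕ∞) f) (k : Fin 3) (x : V3) :
    pd k (Sk k f) x = f x := by
  have hS := Sk_contDiff hf k
  rw [pd_eq_deriv x k ((hS.differentiable one_le_inf).differentiableAt)]
  have heq : (fun t => Sk k f (Function.update x k t))
      = fun t => ∫ s in (0:ℝ)..t, f (Function.update x k s) := by
    funext t
    simp only [Sk, Function.update_self, Function.update_idem]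
  rw [heq]
  have hcont := cont_comp_update hf.continuous x k
  have := intervalIntegral.integral_hasDerivAt_right
    (f := fun s => f (Function.update x k s)) (a := 0) (b := x k)
    (hcont.intervalIntegrable 0 (x k))
    (hcont.stronglyMeasurableAtFilter _ _) hcont.continuousAt
  rw [this.deriv]; simp [Function.update_eq_self]

-- FTC II
lemma Sk_pd_self {g : V3 → ℝ} (hg : ContDiff ℝ (⊤:ℕ∞) g) (k : Fin 3) (x : V3) :
    Sk k (pd k g) x = g x - g (Function.update x k 0) := by
  have h := intervalIntegral.integral_eq_sub_of_hasDerivAt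
    (f := fun s => g (Function.update x k s))
    (f' := fun s => pd k g (Function.update x k s)) (a := 0) (b := x k)
    (fun t _ => hasDerivAt_comp_update ((hg.differentiable one_le_inf).differentiableAt))
    ((cont_comp_update (pd_contDiff hg k).continuous x k).intervalIntegrable 0 (x k))
  rw [Sk, h]; simp [Function.update_eq_self]

lemma Mk_pd_self {g : V3 → ℝ} (hg : ContDiff ℝ (⊤:ℕ∞) g) (k : Fin 3) (x : V3) :
    Mk k (pd k g) x = g (Function.update x k 1) - g (Function.update x k 0) := by
  have h := intervalIntegral.integral_eq_sub_of_hasDerivAt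
    (f := fun s => g (Function.update x k s))
    (f' := fun s => pd k g (Function.update x k s)) (a := 0) (b := 1)
    (fun t _ => hasDerivAt_comp_update ((hg.differentiable one_le_inf).differentiableAt))
    ((cont_comp_update (pd_contDiff hg k).continuous x k).intervalIntegrable 0 1)
  rw [Mk, h]
-- differentiation under the integral sign, transverse direction
lemma key_hasDerivAt {f : V3 → ℝ} (hf : ContDiff ℝ (⊤:ℕ∞) f) {i k : Fin 3} (hik : i ≠ k)
    (x : V3) (b : ℝ) :
    HasDerivAt (fun τ : ℝ => ∫ s in (0:ℝ)..b, f (Function.update (Function.update x i τ) k s))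
      (∫ s in (0:ℝ)..b, pd i f (Function.update x k s)) (x i) := by
  have hpd := pd_contDiff hf i
  -- continuity of the two-variable maps
  have hmap : Continuous (fun p : ℝ × ℝ =>
      (Function.update (Function.update x i p.1) k p.2 : V3)) := by
    have h1 : Continuous (fun p : ℝ × ℝ => (Function.update x i p.1 : V3)) :=
      (contDiff_update2 i).continuous.comp (continuous_const.prodMk continuous_fst)
    exact (contDiff_update2 k).continuous.comp (h1.prodMk continuous_snd)
  have hFcont : Continuous (fun p : ℝ × ℝ =>
      f (Function.update (Function.update x i p.1) k p.2)) := hf.continuous.comp hmap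
  have hF'cont : Continuous (fun p : ℝ × ℝ =>
      pd i f (Function.update (Function.update x i p.1) k p.2)) := hpd.continuous.comp hmap
  obtain ⟨C, hC⟩ := ((isCompact_Icc (a := x i - 1) (b := x i + 1)).prod
    (isCompact_uIcc (a := (0:ℝ)) (b := b))).exists_bound_of_continuousOn hF'cont.continuousOn
  have key := intervalIntegral.hasDerivAt_integral_of_dominated_loc_of_deriv_le
    (μ := volume) (F := fun (τ : ℝ) (s : ℝ) => f (Function.update (Function.update x i τ) k s))
    (F' := fun (τ : ℝ) (s : ℝ) => pd i f (Function.update (Function.update x i τ) k s))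
    (x₀ := x i) (a := 0) (b := b) (bound := fun _ => C) (s := Metric.ball (x i) 1) (Metric.ball_mem_nhds (x i) one_pos)
    ?_ ?_ ?_ ?_ ?_ ?_
  · have h2 := key.2
    have : (fun s => pd i f (Function.update (Function.update x i (x i)) k s))
        = fun s => pd i f (Function.update x k s) := by
      funext s; rw [Function.update_eq_self]
    rwa [this] at h2
  · filter_upwards with τ
    exact ((hFcont.comp (continuous_const.prodMk continuous_id))).aestronglyMeasurable
  · exact (hFcont.comp (continuous_const.prodMk continuous_id)).intervalIntegrable 0 b
  · exact (hF'cont.comp (continuous_const.prodMk continuous_id)).aestronglyMeasurable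
  · filter_upwards with s hs τ hτ
    apply hC (τ, s)
    constructor
    · have := Metric.ball_subset_closedBall hτ
      rw [Real.closedBall_eq_Icc] at this
      exact this
    · exact Set.uIoc_subset_uIcc hs
  · exact intervalIntegrable_const
  · filter_upwards with s hs τ hτ
    have heq : (fun τ' : ℝ => f (Function.update (Function.update x i τ') k s))
        = fun τ' => f (Function.update (Function.update x k s) i τ') := by
      funext τ'; rw [Function.update_comm hik]
    have heq2 : Function.update (Function.update x i τ) k s
        = Function.update (Function.update x k s) i τ := Function.update_comm hik _ _ _
    rw [heq, heq2]
    exact hasDerivAt_comp_update ((hf.differentiable one_le_inf).differentiableAt)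

lemma pd_Sk_other {f : V3 → ℝ} (hf : ContDiff ℝ (⊤:ℕ∞) f) {i k : Fin 3} (hik : i ≠ k) (x : V3) :
    pd i (Sk k f) x = Sk k (pd i f) x := by
  rw [pd_eq_deriv x i (((Sk_contDiff hf k).differentiable one_le_inf).differentiableAt)]
  have heq : (fun τ => Sk k f (Function.update x i τ))
      = fun τ => ∫ s in (0:ℝ)..(x k), f (Function.update (Function.update x i τ) k s) := by
    funext τ
    simp only [Sk, Function.update_of_ne (Ne.symm hik)]
  rw [heq, (key_hasDerivAt hf hik x (x k)).deriv]
  rfl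

lemma pd_Mk_other {f : V3 → ℝ} (hf : ContDiff ℝ (⊤:ℕ∞) f) {i k : Fin 3} (hik : i ≠ k) (x : V3) :
    pd i (Mk k f) x = Mk k (pd i f) x := by
  rw [pd_eq_deriv x i (((Mk_contDiff hf k).differentiable one_le_inf).differentiableAt)]
  have heq : (fun τ => Mk k f (Function.update x i τ))
      = fun τ => ∫ s in (0:ℝ)..1, f (Function.update (Function.update x i τ) k s) := by
    funext τ; rfl
  rw [heq, (key_hasDerivAt hf hik x 1).deriv]
  rfl

-- independence of a coordinate
def IndepC (k : Fin 3) (g : V3 → ℝ) : Prop := ∀ (x : V3) (t : ℝ), g (Function.update x k t) = g x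

lemma Mk_indep (k : Fin 3) (f : V3 → ℝ) : IndepC k (Mk k f) := by
  intro x t
  simp only [Mk, Function.update_idem]

lemma Mk_of_indep {k : Fin 3} {f : V3 → ℝ} (h : IndepC k f) (x : V3) : Mk k f x = f x := by
  simp only [Mk]
  have : (fun t : ℝ => f (Function.update x k t)) = fun _ => f x := by
    funext t; rw [h]
  rw [this]
  simp

lemma Mk_indep_comm {k j : Fin 3} (hjk : j ≠ k) {f : V3 → ℝ} (h : IndepC j f) :
    IndepC j (Mk k f) := by
  intro x t
  simp only [Mk]
  congr 1; funext s
  rw [Function.update_comm hjk, h]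

lemma pd_of_indep {k : Fin 3} {g : V3 → ℝ} (h : IndepC k g) (x : V3)
    (hg : DifferentiableAt ℝ g x) : pd k g x = 0 := by
  rw [pd_eq_deriv x k hg]
  have : (fun t => g (Function.update x k t)) = fun _ => g x := by
    funext t; rw [h]
  rw [this, deriv_const]

-- composition with freezing one coordinate
lemma pd_comp_update_self {j : Fin 3} {c : ℝ} {f : V3 → ℝ} (hf : ContDiff ℝ (⊤:ℕ∞) f) (x : V3) :
    pd j (fun y => f (Function.update y j c)) x = 0 := by
  apply pd_of_indep (fun y t => by simp only [Function.update_idem]) x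
  exact ((contDiff_update_comp hf j c).differentiable one_le_inf).differentiableAt
lemma update_add_int (x : V3) (n : Fin 3 → ℤ) (k : Fin 3) (t : ℝ) :
    Function.update (x + fun i => (n i : ℝ)) k t
      = Function.update x k (t - n k) + fun i => (n i : ℝ) := by
  funext j
  rcases eq_or_ne j k with h | h
  · subst h; simp
  · simp [Function.update_of_ne h]

lemma periodic_line {f : V3 → ℝ} (hper : SpacePeriodic f) (x : V3) (k : Fin 3) :
    Function.Periodic (fun t => f (Function.update x k t)) 1 := by
  intro t
  have : Function.update x k (t + 1)
      = Function.update x k t + fun i => ((Pi.single k 1 : Fin 3 → ℤ) i : ℝ) := by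
    funext j
    rcases eq_or_ne j k with h | h
    · subst h; simp
    · simp [Function.update_of_ne h, Pi.single_eq_of_ne h]
  have hrw : ∀ y : V3, f (y + fun i => ((Pi.single k 1 : Fin 3 → ℤ) i : ℝ)) = f y :=
    fun y => hper y _
  simp only [this, hrw]

lemma periodic_pd {f : V3 → ℝ} (hf : ContDiff ℝ (⊤:ℕ∞) f) (hper : SpacePeriodic f) (i : Fin 3) :
    SpacePeriodic (pd i f) := by
  intro x n
  set nR : V3 := (fun i => (n i : ℝ)) with hnR
  have hT : HasFDerivAt (fun y : V3 => y + nR) (ContinuousLinearMap.id ℝ V3) x :=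
    (hasFDerivAt_id x).add_const nR
  have hcomp : HasFDerivAt (fun y => f (y + nR)) (fderiv ℝ f (x + nR)) x := by
    have := ((hf.differentiable one_le_inf) (x + nR)).hasFDerivAt.comp x hT
    exact this
  have hfun : (fun y => f (y + nR)) = f := by funext y; exact hper y n
  rw [hfun] at hcomp
  have : fderiv ℝ f x = fderiv ℝ f (x + nR) := by
    rw [hcomp.fderiv]
  simp only [pd]
  rw [this]

lemma periodic_Mk {f : V3 → ℝ} (hf : Continuous f) (hper : SpacePeriodic f) (k : Fin 3) :
    SpacePeriodic (Mk k f) := by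
  intro x n
  have hg : Continuous (fun t => f (Function.update x k t)) := cont_comp_update hf x k
  have hgp := periodic_line hper x k
  have hrw : ∀ y : V3, f (y + fun i => (n i : ℝ)) = f y := fun y => hper y n
  calc Mk k f (x + fun i => (n i : ℝ))
      = ∫ t in (0:ℝ)..1, f (Function.update x k (t - n k)) := by
        simp only [Mk, update_add_int, hrw]
    _ = ∫ s in (0:ℝ) - n k..(1:ℝ) - n k, f (Function.update x k s) := by
        rw [intervalIntegral.integral_comp_sub_right (fun s => f (Function.update x k s)) (n k)]
    _ = ∫ s in (0:ℝ)..1, f (Function.update x k s) := by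
        rw [show (0:ℝ) - n k = -(n k:ℝ) by ring, show (1:ℝ) - n k = -(n k:ℝ) + 1 by ring]
        have := hgp.intervalIntegral_add_eq (-(n k:ℝ)) 0
        simpa using this
    _ = Mk k f x := rfl

lemma periodic_Sk {f : V3 → ℝ} (hf : Continuous f) (hper : SpacePeriodic f) (k : Fin 3)
    (hM : ∀ x, Mk k f x = 0) : SpacePeriodic (Sk k f) := by
  intro x n
  have hg : Continuous (fun t => f (Function.update x k t)) := cont_comp_update hf x k
  have hgp := periodic_line hper x k
  have hint : ∀ t₁ t₂ : ℝ, IntervalIntegrable (fun t => f (Function.update x k t)) volume t₁ t₂ :=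
    fun t₁ t₂ => hg.intervalIntegrable t₁ t₂
  have hxk : (x + fun i => (n i : ℝ)) k = x k + n k := rfl
  have hrw : ∀ y : V3, f (y + fun i => (n i : ℝ)) = f y := fun y => hper y n
  calc Sk k f (x + fun i => (n i : ℝ))
      = ∫ t in (0:ℝ)..(x k + n k), f (Function.update x k (t - n k)) := by
        simp only [Sk, update_add_int, hrw, hxk]
    _ = ∫ s in (0:ℝ) - n k..(x k + n k) - n k, f (Function.update x k s) := by
        rw [intervalIntegral.integral_comp_sub_right (fun s => f (Function.update x k s)) (n k)]
    _ = ∫ s in -(n k:ℝ)..(x k), f (Function.update x k s) := by norm_num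
    _ = (∫ s in -(n k:ℝ)..(0:ℝ), f (Function.update x k s))
          + ∫ s in (0:ℝ)..(x k), f (Function.update x k s) := by
        rw [intervalIntegral.integral_add_adjacent_intervals (hint _ _) (hint _ _)]
    _ = Sk k f x := by
        have hzs := hgp.intervalIntegral_add_zsmul_eq (n k) (-(n k:ℝ)) hint
        have he : -(n k:ℝ) + (n k : ℤ) • (1:ℝ) = 0 := by
          simp only [zsmul_eq_mul]; push_cast; ring
        rw [he] at hzs
        have h2 := hgp.intervalIntegral_add_eq (-(n k:ℝ)) 0
        have hM0 : (∫ s in (0:ℝ)..(0+1:ℝ), f (Function.update x k s)) = 0 := by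
          have := hM x
          simpa [Mk] using this
        rw [hzs, h2, hM0, smul_zero, zero_add, Sk]

lemma periodic_comp_update {f : V3 → ℝ} (hper : SpacePeriodic f) (j : Fin 3) (c : ℝ) :
    SpacePeriodic (fun x => f (Function.update x j c)) := by
  intro x n
  have : Function.update (x + fun i => (n i : ℝ)) j c
      = Function.update x j c + fun i => ((Function.update n j 0 : Fin 3 → ℤ) i : ℝ) := by
    funext m
    rcases eq_or_ne m j with h | h
    · subst h; simp
    · simp [Function.update_of_ne h]
  have hrw : ∀ y : V3, f (y + fun i => ((Function.update n j 0 : Fin 3 → ℤ) i : ℝ)) = f y :=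
    fun y => hper y _
  simp only [this, hrw]

lemma periodic_sub {f g : V3 → ℝ} (hf : SpacePeriodic f) (hg : SpacePeriodic g) :
    SpacePeriodic (fun x => f x - g x) := fun x n => by simp only []; rw [hf x n, hg x n]

lemma periodic_neg {f : V3 → ℝ} (hf : SpacePeriodic f) :
    SpacePeriodic (fun x => -f x) := fun x n => by simp only []; rw [hf x n]

-- average of a derivative in its own direction vanishes
lemma Mk_pd_periodic {f : V3 → ℝ} (hf : ContDiff ℝ (⊤:ℕ∞) f) (hper : SpacePeriodic f)
    (k : Fin 3) (x : V3) : Mk k (pd k f) x = 0 := by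
  rw [Mk_pd_self hf k x]
  have : Function.update x k 1
      = Function.update x k 0 + fun i => ((Pi.single k 1 : Fin 3 → ℤ) i : ℝ) := by
    funext j
    rcases eq_or_ne j k with h | h
    · subst h; simp
    · simp [Function.update_of_ne h, Pi.single_eq_of_ne h]
  rw [this, hper, sub_self]

-- constancy from vanishing partials
lemma const_of_pd_zero {g : V3 → ℝ} (hg : ContDiff ℝ (⊤:ℕ∞) g)
    (h : ∀ (i : Fin 3) (x : V3), pd i g x = 0) (x y : V3) : g x = g y := by
  apply is_const_of_fderiv_eq_zero (𝕜 := ℝ) (hg.differentiable one_le_inf)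
  intro z
  ext v
  have hv : v = ∑ i : Fin 3, v i • (Pi.single i 1 : V3) := by
    funext j
    simp [Pi.single_apply, Finset.sum_ite_eq' Finset.univ j (fun i => v i * 1)]
  rw [ContinuousLinearMap.zero_apply, hv]
  rw [map_sum]
  apply Finset.sum_eq_zero
  intro i _
  rw [(fderiv ℝ g z).map_smul]
  have := h i z
  rw [pd] at this
  rw [this, smul_zero]
lemma volume_cube : volume cube = 1 := by
  rw [cube, Real.volume_Icc_pi]
  simp

lemma integrableOn_cube {f : V3 → ℝ} (hf : Continuous f) : IntegrableOn f cube :=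
  hf.continuousOn.integrableOn_compact isCompact_Icc

section Fub
variable (k : Fin 3)

abbrev eqv (k : Fin 3) : V3 ≃ᵐ ℝ × (Fin 2 → ℝ) :=
  MeasurableEquiv.piFinSuccAbove (fun _ : Fin 3 => ℝ) k

lemma eqv_symm_eq (t : ℝ) (z : Fin 2 → ℝ) : (eqv k).symm (t, z) = k.insertNth t z := by
  simp [MeasurableEquiv.piFinSuccAbove_symm_apply, Fin.insertNthEquiv]

lemma eqv_preimage :
    (eqv k) ⁻¹' ((Set.Icc (0:ℝ) 1) ×ˢ (Set.Icc (0:Fin 2 → ℝ) 1)) = cube := by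
  ext x
  simp only [Set.mem_preimage, Set.mem_prod, MeasurableEquiv.piFinSuccAbove_apply, cube,
    Set.mem_Icc, Pi.le_def]
  constructor
  · rintro ⟨⟨ha, hb⟩, h2, h3⟩
    exact ⟨(Fin.forall_iff_succAbove k).2 ⟨ha, fun j => h2 j⟩,
      (Fin.forall_iff_succAbove k).2 ⟨hb, fun j => h3 j⟩⟩
  · rintro ⟨h1, h2⟩
    exact ⟨⟨h1 k, h2 k⟩, fun j => h1 _, fun j => h2 _⟩

lemma eqv_symm_update (t s : ℝ) (z : Fin 2 → ℝ) :
    Function.update ((eqv k).symm (t, z)) k s = (eqv k).symm (s, z) := by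
  rw [eqv_symm_eq, eqv_symm_eq]
  funext m
  rcases eq_or_ne m k with h | h
  · subst h; simp
  · obtain ⟨j, rfl⟩ := Fin.exists_succAbove_eq h
    simp [Function.update_of_ne h, Fin.insertNth_apply_succAbove]

lemma integral_cube_eq (g : V3 → ℝ) (hg : Continuous g) :
    ∫ x in cube, g x = ∫ z in Set.Icc (0:Fin 2 → ℝ) 1, ∫ t in Set.Icc (0:ℝ) 1,
      g ((eqv k).symm (t, z)) := by
  have hmp : MeasurePreserving (eqv k) volume volume :=
    MeasureTheory.volume_preserving_piFinSuccAbove (fun _ : Fin 3 => ℝ) k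
  have hres : MeasurePreserving (eqv k) (volume.restrict cube)
      (volume.restrict ((Set.Icc (0:ℝ) 1) ×ˢ (Set.Icc (0:Fin 2 → ℝ) 1))) := by
    have := hmp.restrict_preimage_emb (eqv k).measurableEmbedding
      ((Set.Icc (0:ℝ) 1) ×ˢ (Set.Icc (0:Fin 2 → ℝ) 1))
    rwa [eqv_preimage] at this
  have hcomp : ((fun p : ℝ × (Fin 2 → ℝ) => g ((eqv k).symm p)) ∘ (eqv k)) = g := by
    funext x; exact congrArg g (MeasurableEquiv.symm_apply_apply _ _)
  have step1 : ∫ x in cube, g x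
      = ∫ p in (Set.Icc (0:ℝ) 1) ×ˢ (Set.Icc (0:Fin 2 → ℝ) 1), g ((eqv k).symm p) := by
    rw [← hres.integral_comp (eqv k).measurableEmbedding (fun p => g ((eqv k).symm p))]
    simp_rw [MeasurableEquiv.symm_apply_apply]
  have hrp : (volume : Measure (ℝ × (Fin 2 → ℝ))).restrict
        ((Set.Icc (0:ℝ) 1) ×ˢ (Set.Icc (0:Fin 2 → ℝ) 1))
      = (volume.restrict (Set.Icc (0:ℝ) 1)).prod (volume.restrict (Set.Icc (0:Fin 2 → ℝ) 1)) := by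
    rw [Measure.volume_eq_prod, Measure.prod_restrict]
  have hint : Integrable (fun p : ℝ × (Fin 2 → ℝ) => g ((eqv k).symm p))
      ((volume.restrict (Set.Icc (0:ℝ) 1)).prod (volume.restrict (Set.Icc (0:Fin 2 → ℝ) 1))) := by
    rw [← hrp, ← hres.integrable_comp_emb (eqv k).measurableEmbedding, hcomp]
    exact integrableOn_cube hg
  rw [step1]
  show (∫ p, g ((eqv k).symm p) ∂(volume.restrict _)) = _
  rw [hrp]
  exact MeasureTheory.integral_prod_symm (fun p => g ((eqv k).symm p)) hint

lemma integral_cube_Mk {f : V3 → ℝ} (hf : ContDiff ℝ (⊤:ℕ∞) f) :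
    ∫ x in cube, Mk k f x = ∫ x in cube, f x := by
  rw [integral_cube_eq k f hf.continuous,
    integral_cube_eq k (Mk k f) (Mk_contDiff hf k).continuous]
  congr 1
  funext z
  have hMk : ∀ t : ℝ, Mk k f ((eqv k).symm (t, z))
      = ∫ s in (0:ℝ)..1, f ((eqv k).symm (s, z)) := by
    intro t
    simp only [Mk, eqv_symm_update]
  simp_rw [hMk]
  rw [MeasureTheory.setIntegral_const, Real.volume_real_Icc]
  norm_num
  rw [intervalIntegral.integral_of_le (by norm_num : (0:ℝ) ≤ 1),
    ← MeasureTheory.integral_Icc_eq_integral_Ioc]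

end Fub
lemma Mk_congr {k : Fin 3} {f g : V3 → ℝ} (h : ∀ y, f y = g y) (x : V3) :
    Mk k f x = Mk k g x := by
  simp only [Mk]; congr 1; funext t; rw [h]

lemma Sk_congr {k : Fin 3} {f g : V3 → ℝ} (h : ∀ y, f y = g y) (x : V3) :
    Sk k f x = Sk k g x := by
  simp only [Sk]; congr 1; funext t; rw [h]

lemma Mk_add {k : Fin 3} {f g : V3 → ℝ} (hf : Continuous f) (hg : Continuous g) (x : V3) :
    Mk k (fun y => f y + g y) x = Mk k f x + Mk k g x := by
  simp only [Mk]
  exact intervalIntegral.integral_add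
    ((cont_comp_update hf x k).intervalIntegrable 0 1)
    ((cont_comp_update hg x k).intervalIntegrable 0 1)

lemma Mk_neg {k : Fin 3} {f : V3 → ℝ} (x : V3) :
    Mk k (fun y => -f y) x = - Mk k f x := by
  simp only [Mk]
  exact intervalIntegral.integral_neg

lemma Mk_sub {k : Fin 3} {f g : V3 → ℝ} (hf : Continuous f) (hg : Continuous g) (x : V3) :
    Mk k (fun y => f y - g y) x = Mk k f x - Mk k g x := by
  simp only [Mk]
  exact intervalIntegral.integral_sub
    ((cont_comp_update hf x k).intervalIntegrable 0 1)
    ((cont_comp_update hg x k).intervalIntegrable 0 1)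

lemma Sk_sub {k : Fin 3} {f g : V3 → ℝ} (hf : Continuous f) (hg : Continuous g) (x : V3) :
    Sk k (fun y => f y - g y) x = Sk k f x - Sk k g x := by
  simp only [Sk]
  exact intervalIntegral.integral_sub
    ((cont_comp_update hf x k).intervalIntegrable 0 (x k))
    ((cont_comp_update hg x k).intervalIntegrable 0 (x k))

lemma eq_zero_of_pd_zero_of_mean {g : V3 → ℝ} (hg : ContDiff ℝ (⊤:ℕ∞) g)
    (hpd : ∀ (i : Fin 3) (x : V3), pd i g x = 0)
    (hm : ∫ x in cube, g x = 0) (x : V3) : g x = 0 := by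
  have hconst : ∀ y : V3, g y = g x := fun y => const_of_pd_zero hg hpd y x
  have : ∫ y in cube, g y = g x := by
    rw [show g = fun _ => g x from funext hconst, MeasureTheory.setIntegral_const, measureReal_def, volume_cube]
    simp
  rw [this] at hm
  exact hm

/-- The double average of one component of a periodic divergence-free mean-zero field
vanishes identically. -/
lemma double_avg_zero {fa fb fc : V3 → ℝ}
    (hfa : ContDiff ℝ (⊤:ℕ∞) fa) (hfb : ContDiff ℝ (⊤:ℕ∞) fb) (hfc : ContDiff ℝ (⊤:ℕ∞) fc)
    (hpa : SpacePeriodic fa) (hpb : SpacePeriodic fb) (hpc : SpacePeriodic fc)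
    {a b c : Fin 3} (hab : a ≠ b) (hca : c ≠ a) (hcb : c ≠ b)
    (hsum : ∀ x, pd a fa x + pd b fb x + pd c fc x = 0)
    (hm : ∫ x in cube, fc x = 0) (x : V3) :
    Mk a (Mk b fc) x = 0 := by
  set G := Mk a (Mk b fc) with hG
  have hMbfc : ContDiff ℝ (⊤:ℕ∞) (Mk b fc) := Mk_contDiff hfc b
  have hGsm : ContDiff ℝ (⊤:ℕ∞) G := Mk_contDiff hMbfc a
  have hGdiff : ∀ y : V3, DifferentiableAt ℝ G y :=
    fun y => ((hGsm.differentiable one_le_inf) y)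
  apply eq_zero_of_pd_zero_of_mean hGsm _ _ x
  · intro i y
    rcases eq_or_ne i a with h | hia
    · subst h
      exact pd_of_indep (Mk_indep _ _) y (hGdiff y)
    rcases eq_or_ne i b with h | hib
    · subst h
      exact pd_of_indep (Mk_indep_comm hia (Mk_indep _ _)) y (hGdiff y)
    have hic : c = i := by
      revert hia hib hab hca hcb
      fin_cases i <;> fin_cases a <;> fin_cases b <;> fin_cases c <;> decide
    subst hic
    rw [pd_Mk_other hMbfc hia y, Mk_congr (fun w => pd_Mk_other hfc hib w)]
    have hdivc : ∀ w, pd c fc w = -(pd a fa w) + -(pd b fb w) := by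
      intro w; have := hsum w; linarith
    have e2 : ∀ w, Mk b (fun v => -(pd b fb v)) w = 0 := by
      intro w
      rw [Mk_neg, Mk_pd_periodic hfb hpb b w, neg_zero]
    have e3 : ∀ w, Mk b (fun v => -(pd a fa v)) w = -(pd a (Mk b fa) w) := by
      intro w
      rw [Mk_neg, (pd_Mk_other hfa hab w).symm]
    have e1 : ∀ w, Mk b (pd c fc) w = -(pd a (Mk b fa) w) := by
      intro w
      rw [Mk_congr hdivc w,
        Mk_add (f := fun v => -(pd a fa v)) (g := fun v => -(pd b fb v)) ((pd_contDiff hfa a).continuous.neg) ((pd_contDiff hfb b).continuous.neg) w,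
        e2 w, e3 w, add_zero]
    rw [Mk_congr e1 y, Mk_neg,
      Mk_pd_periodic (Mk_contDiff hfa b) (periodic_Mk hfa.continuous hpa b) a y, neg_zero]
  · rw [hG, integral_cube_Mk a (Mk_contDiff hfc b), integral_cube_Mk b hfc]
    exact hm
lemma diffAt {f : V3 → ℝ} (hf : ContDiff ℝ (⊤:ℕ∞) f) (x : V3) : DifferentiableAt ℝ f x :=
  (hf.differentiable one_le_inf).differentiableAt

lemma Sk_zero (k : Fin 3) (x : V3) : Sk k (fun _ => (0:ℝ)) x = 0 := by
  simp [Sk]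

lemma Sk_neg {k : Fin 3} {f : V3 → ℝ} (x : V3) :
    Sk k (fun y => -f y) x = - Sk k f x := by
  simp only [Sk]
  exact intervalIntegral.integral_neg

abbrev Mat3' := Fin 3 → Fin 3 → ℝ

namespace Constr
variable (u : V3 → V3)

abbrev cmp (i : Fin 3) : V3 → ℝ := fun x => u x i
def R0 : V3 → ℝ := Mk 2 (cmp u 0)
def R1 : V3 → ℝ := Mk 2 (cmp u 1)
def R2 : V3 → ℝ := fun x => u (Function.update x 2 0) 2
def Qf : V3 → ℝ := fun x => R1 u (Function.update x 1 0)
def Pf : V3 → ℝ := Mk 1 (R2 u)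
def W0 : V3 → ℝ := fun x =>
  Sk 2 (fun y => cmp u 1 y - R1 u y) x - Sk 1 (fun y => R2 u y - Pf u y) x
def W1 : V3 → ℝ := fun x =>
  Sk 0 (Pf u) x - Sk 2 (fun y => cmp u 0 y - R0 u y) x
def W2 : V3 → ℝ := fun x => Sk 1 (R0 u) x - Sk 0 (Qf u) x

variable {u}
variable (hu : ContDiff ℝ (⊤:ℕ∞) u) (hper : SpacePeriodic u)

section Smooth
include hu

lemma cmp_cd (i : Fin 3) : ContDiff ℝ (⊤:ℕ∞) (cmp u i) := contDiff_pi.mp hu i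
lemma R0_cd : ContDiff ℝ (⊤:ℕ∞) (R0 u) := Mk_contDiff (cmp_cd hu 0) 2
lemma R1_cd : ContDiff ℝ (⊤:ℕ∞) (R1 u) := Mk_contDiff (cmp_cd hu 1) 2
lemma R2_cd : ContDiff ℝ (⊤:ℕ∞) (R2 u) := contDiff_update_comp (cmp_cd hu 2) 2 0
lemma Qf_cd : ContDiff ℝ (⊤:ℕ∞) (Qf u) := contDiff_update_comp (R1_cd hu) 1 0
lemma Pf_cd : ContDiff ℝ (⊤:ℕ∞) (Pf u) := Mk_contDiff (R2_cd hu) 1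
lemma W0_cd : ContDiff ℝ (⊤:ℕ∞) (W0 u) :=
  (Sk_contDiff ((cmp_cd hu 1).sub (R1_cd hu)) 2).sub (Sk_contDiff ((R2_cd hu).sub (Pf_cd hu)) 1)
lemma W1_cd : ContDiff ℝ (⊤:ℕ∞) (W1 u) :=
  (Sk_contDiff (Pf_cd hu) 0).sub (Sk_contDiff ((cmp_cd hu 0).sub (R0_cd hu)) 2)
lemma W2_cd : ContDiff ℝ (⊤:ℕ∞) (W2 u) :=
  (Sk_contDiff (R0_cd hu) 1).sub (Sk_contDiff (Qf_cd hu) 0)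

end Smooth

section Periodic
include hu hper

lemma cmp_per (i : Fin 3) : SpacePeriodic (cmp u i) := fun x n => congrFun (hper x n) i
lemma R0_per : SpacePeriodic (R0 u) := periodic_Mk (cmp_cd hu 0).continuous (cmp_per hu hper 0) 2
lemma R1_per : SpacePeriodic (R1 u) := periodic_Mk (cmp_cd hu 1).continuous (cmp_per hu hper 1) 2
lemma R2_per : SpacePeriodic (R2 u) := periodic_comp_update (cmp_per hu hper 2) 2 0
lemma Qf_per : SpacePeriodic (Qf u) := periodic_comp_update (R1_per hu hper) 1 0
lemma Pf_per : SpacePeriodic (Pf u) := periodic_Mk (R2_cd hu).continuous (R2_per hu hper) 1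

end Periodic

end Constr
lemma Mk_comp_update {k j : Fin 3} (hkj : k ≠ j) (f : V3 → ℝ) (c : ℝ) (x : V3) :
    Mk k (fun y => f (Function.update y j c)) x = Mk k f (Function.update x j c) := by
  simp only [Mk]
  congr 1
  funext t
  rw [Function.update_comm hkj]

namespace Constr
variable {u : V3 → V3}
variable (hu : ContDiff ℝ (⊤:ℕ∞) u) (hper : SpacePeriodic u)
  (hdiv : ∀ x, divV u x = 0) (hmean : (∫ x in cube, u x) = 0)

section Sum
include hu hdiv

lemma hsum012 : ∀ x, pd 0 (cmp u 0) x + pd 1 (cmp u 1) x + pd 2 (cmp u 2) x = 0 := by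
  intro x
  have := hdiv x
  rwa [divV, Fin.sum_univ_three] at this

end Sum

section Mean
include hu hmean

lemma hm_cmp (i : Fin 3) : ∫ x in cube, cmp u i x = 0 := by
  have hInt : IntegrableOn u cube := hu.continuous.continuousOn.integrableOn_compact isCompact_Icc
  have h := (ContinuousLinearMap.proj (R := ℝ) (φ := fun _ : Fin 3 => ℝ) i).integral_comp_comm hInt
  simp only [hmean, map_zero] at h
  exact h

end Mean

section ZeroAvg
include hu hper hdiv hmean

lemma hM0p : ∀ x, Mk 0 (Pf u) x = 0 := by
  intro x
  have step1 : ∀ y, Pf u y = Mk 1 (cmp u 2) (Function.update y 2 0) := fun y =>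
    Mk_comp_update (by decide) (cmp u 2) 0 y
  rw [Mk_congr step1 x, Mk_comp_update (by decide) (Mk 1 (cmp u 2)) 0 x]
  exact double_avg_zero (a := 0) (b := 1) (c := 2) (cmp_cd hu 0) (cmp_cd hu 1) (cmp_cd hu 2)
    (cmp_per hu hper 0) (cmp_per hu hper 1) (cmp_per hu hper 2)
    (by decide) (by decide) (by decide)
    (hsum012 hu hdiv) (hm_cmp hu hmean 2) _

lemma hM0q : ∀ x, Mk 0 (Qf u) x = 0 := by
  intro x
  rw [show Qf u = fun y => R1 u (Function.update y 1 0) from rfl,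
    Mk_comp_update (by decide) (R1 u) 0 x]
  exact double_avg_zero (a := 0) (b := 2) (c := 1) (cmp_cd hu 0) (cmp_cd hu 2) (cmp_cd hu 1)
    (cmp_per hu hper 0) (cmp_per hu hper 2) (cmp_per hu hper 1)
    (by decide) (by decide) (by decide)
    (fun x => by have := hsum012 hu hdiv x; linarith) (hm_cmp hu hmean 1) _

lemma hM1r0 : ∀ x, Mk 1 (R0 u) x = 0 := by
  intro x
  exact double_avg_zero (a := 1) (b := 2) (c := 0) (cmp_cd hu 1) (cmp_cd hu 2) (cmp_cd hu 0)
    (cmp_per hu hper 1) (cmp_per hu hper 2) (cmp_per hu hper 0)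
    (by decide) (by decide) (by decide)
    (fun x => by have := hsum012 hu hdiv x; linarith) (hm_cmp hu hmean 0) x

end ZeroAvg

section WP
include hu hper hdiv hmean

lemma hM2a : ∀ x, Mk 2 (fun y => cmp u 1 y - R1 u y) x = 0 := by
  intro x
  have hind : IndepC 2 (R1 u) := Mk_indep 2 (cmp u 1)
  rw [Mk_sub (cmp_cd hu 1).continuous (R1_cd hu).continuous x, Mk_of_indep hind x]
  exact sub_self _

lemma hM2b : ∀ x, Mk 2 (fun y => cmp u 0 y - R0 u y) x = 0 := by
  intro x
  have hind : IndepC 2 (R0 u) := Mk_indep 2 (cmp u 0)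
  rw [Mk_sub (cmp_cd hu 0).continuous (R0_cd hu).continuous x, Mk_of_indep hind x]
  exact sub_self _

lemma hM1c : ∀ x, Mk 1 (fun y => R2 u y - Pf u y) x = 0 := by
  intro x
  have hind : IndepC 1 (Pf u) := Mk_indep 1 (R2 u)
  rw [Mk_sub (R2_cd hu).continuous (Pf_cd hu).continuous x, Mk_of_indep hind x]
  exact sub_self _

lemma W0_per : SpacePeriodic (W0 u) :=
  periodic_sub
    (periodic_Sk ((cmp_cd hu 1).sub (R1_cd hu)).continuous
      (periodic_sub (cmp_per hu hper 1) (R1_per hu hper)) 2 (hM2a hu hper hdiv hmean))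
    (periodic_Sk ((R2_cd hu).sub (Pf_cd hu)).continuous
      (periodic_sub (R2_per hu hper) (Pf_per hu hper)) 1 (hM1c hu hper hdiv hmean))

lemma W1_per : SpacePeriodic (W1 u) :=
  periodic_sub
    (periodic_Sk (Pf_cd hu).continuous (Pf_per hu hper) 0 (hM0p hu hper hdiv hmean))
    (periodic_Sk ((cmp_cd hu 0).sub (R0_cd hu)).continuous
      (periodic_sub (cmp_per hu hper 0) (R0_per hu hper)) 2 (hM2b hu hper hdiv hmean))

lemma W2_per : SpacePeriodic (W2 u) :=
  periodic_sub
    (periodic_Sk (R0_cd hu).continuous (R0_per hu hper) 1 (hM1r0 hu hper hdiv hmean))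
    (periodic_Sk (Qf_cd hu).continuous (Qf_per hu hper) 0 (hM0q hu hper hdiv hmean))

end WP
end Constr
lemma Mk_zero (k : Fin 3) (x : V3) : Mk k (fun _ => (0:ℝ)) x = 0 := by simp [Mk]

lemma Sk_add {k : Fin 3} {f g : V3 → ℝ} (hf : Continuous f) (hg : Continuous g) (x : V3) :
    Sk k (fun y => f y + g y) x = Sk k f x + Sk k g x := by
  simp only [Sk]
  exact intervalIntegral.integral_add
    ((cont_comp_update hf x k).intervalIntegrable 0 (x k))
    ((cont_comp_update hg x k).intervalIntegrable 0 (x k))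

namespace Constr
variable {u : V3 → V3}
variable (hu : ContDiff ℝ (⊤:ℕ∞) u) (hper : SpacePeriodic u)
  (hdiv : ∀ x, divV u x = 0)

section Curl
include hu

lemma pdR2_2 : ∀ w, pd 2 (R2 u) w = 0 := fun w =>
  pd_comp_update_self (f := cmp u 2) (cmp_cd hu 2) w

lemma pdQf1 : ∀ w, pd 1 (Qf u) w = 0 := fun w =>
  pd_comp_update_self (f := R1 u) (R1_cd hu) w

lemma pdPf2 : ∀ w, pd 2 (Pf u) w = 0 := by
  intro w
  have h1 : pd 2 (Pf u) w = Mk 1 (pd 2 (R2 u)) w :=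
    pd_Mk_other (R2_cd hu) (by decide) w
  rw [h1, Mk_congr (pdR2_2 hu) w, Mk_zero]

-- ∂₁ W2 = R0
lemma pdW2_1 (x : V3) : pd 1 (W2 u) x = R0 u x := by
  have h := pd_sub (f := Sk 1 (R0 u)) (g := Sk 0 (Qf u)) (x := x) 1
    (diffAt (Sk_contDiff (R0_cd hu) 1) x) (diffAt (Sk_contDiff (Qf_cd hu) 0) x)
  rw [show W2 u = fun y => Sk 1 (R0 u) y - Sk 0 (Qf u) y from rfl, h,
    pd_Sk_self (R0_cd hu) 1 x, pd_Sk_other (Qf_cd hu) (by decide) x,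
    Sk_congr (pdQf1 hu) x, Sk_zero, sub_zero]

-- ∂₂ W1 = -(u0 - R0)
lemma pdW1_2 (x : V3) : pd 2 (W1 u) x = -(cmp u 0 x - R0 u x) := by
  have h := pd_sub (f := Sk 0 (Pf u)) (g := Sk 2 (fun y => cmp u 0 y - R0 u y)) (x := x) 2
    (diffAt (Sk_contDiff (Pf_cd hu) 0) x)
    (diffAt (Sk_contDiff ((cmp_cd hu 0).sub (R0_cd hu)) 2) x)
  rw [show W1 u = fun y => Sk 0 (Pf u) y - Sk 2 (fun y' => cmp u 0 y' - R0 u y') y from rfl, h,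
    pd_Sk_other (Pf_cd hu) (by decide) x, Sk_congr (pdPf2 hu) x, Sk_zero,
    pd_Sk_self ((cmp_cd hu 0).sub (R0_cd hu)) 2 x, zero_sub]

-- ∂₂ W0 = u1 - R1
lemma pdW0_2 (x : V3) : pd 2 (W0 u) x = cmp u 1 x - R1 u x := by
  have h := pd_sub (f := Sk 2 (fun y => cmp u 1 y - R1 u y))
    (g := Sk 1 (fun y => R2 u y - Pf u y)) (x := x) 2
    (diffAt (Sk_contDiff ((cmp_cd hu 1).sub (R1_cd hu)) 2) x)
    (diffAt (Sk_contDiff ((R2_cd hu).sub (Pf_cd hu)) 1) x)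
  have hz : ∀ w, pd 2 (fun y => R2 u y - Pf u y) w = 0 := by
    intro w
    rw [pd_sub 2 (diffAt (R2_cd hu) w) (diffAt (Pf_cd hu) w), pdR2_2 hu w, pdPf2 hu w, sub_zero]
  rw [show W0 u = fun y => Sk 2 (fun y' => cmp u 1 y' - R1 u y') y
      - Sk 1 (fun y' => R2 u y' - Pf u y') y from rfl, h,
    pd_Sk_self ((cmp_cd hu 1).sub (R1_cd hu)) 2 x,
    pd_Sk_other ((R2_cd hu).sub (Pf_cd hu)) (by decide) x, Sk_congr hz x, Sk_zero, sub_zero]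

-- ∂₀ W1
lemma pdW1_0 (x : V3) :
    pd 0 (W1 u) x = Pf u x - Sk 2 (pd 0 (fun y => cmp u 0 y - R0 u y)) x := by
  have h := pd_sub (f := Sk 0 (Pf u)) (g := Sk 2 (fun y => cmp u 0 y - R0 u y)) (x := x) 0
    (diffAt (Sk_contDiff (Pf_cd hu) 0) x)
    (diffAt (Sk_contDiff ((cmp_cd hu 0).sub (R0_cd hu)) 2) x)
  rw [show W1 u = fun y => Sk 0 (Pf u) y - Sk 2 (fun y' => cmp u 0 y' - R0 u y') y from rfl, h,
    pd_Sk_self (Pf_cd hu) 0 x, pd_Sk_other ((cmp_cd hu 0).sub (R0_cd hu)) (by decide) x]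

-- ∂₁ W0
lemma pdW0_1 (x : V3) :
    pd 1 (W0 u) x = Sk 2 (pd 1 (fun y => cmp u 1 y - R1 u y)) x - (R2 u x - Pf u x) := by
  have h := pd_sub (f := Sk 2 (fun y => cmp u 1 y - R1 u y))
    (g := Sk 1 (fun y => R2 u y - Pf u y)) (x := x) 1
    (diffAt (Sk_contDiff ((cmp_cd hu 1).sub (R1_cd hu)) 2) x)
    (diffAt (Sk_contDiff ((R2_cd hu).sub (Pf_cd hu)) 1) x)
  rw [show W0 u = fun y => Sk 2 (fun y' => cmp u 1 y' - R1 u y') y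
      - Sk 1 (fun y' => R2 u y' - Pf u y') y from rfl, h,
    pd_Sk_other ((cmp_cd hu 1).sub (R1_cd hu)) (by decide) x,
    pd_Sk_self ((R2_cd hu).sub (Pf_cd hu)) 1 x]


include hper hdiv

-- ∂₀ R0 = -∂₁ R1
lemma hpdR0 : ∀ w, pd 0 (R0 u) w = -(pd 1 (R1 u) w) := by
  intro w
  have h1 : pd 0 (R0 u) w = Mk 2 (pd 0 (cmp u 0)) w := pd_Mk_other (cmp_cd hu 0) (by decide) w
  have hdiv' : ∀ v, pd 0 (cmp u 0) v = -(pd 1 (cmp u 1) v) + -(pd 2 (cmp u 2) v) := by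
    intro v; have := hsum012 hu hdiv v; linarith
  rw [h1, Mk_congr hdiv' w,
    Mk_add (f := fun v => -(pd 1 (cmp u 1) v)) (g := fun v => -(pd 2 (cmp u 2) v))
      ((pd_contDiff (cmp_cd hu 1) 1).continuous.neg)
      ((pd_contDiff (cmp_cd hu 2) 2).continuous.neg) w,
    Mk_neg, Mk_neg, Mk_pd_periodic (cmp_cd hu 2) (cmp_per hu hper 2) 2 w, neg_zero, add_zero,
    (pd_Mk_other (cmp_cd hu 1) (by decide : (1:Fin 3) ≠ 2) w).symm]
  rfl

-- ∂₀ W2 = -R1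
lemma pdW2_0 (x : V3) : pd 0 (W2 u) x = -(R1 u x) := by
  have h := pd_sub (f := Sk 1 (R0 u)) (g := Sk 0 (Qf u)) (x := x) 0
    (diffAt (Sk_contDiff (R0_cd hu) 1) x) (diffAt (Sk_contDiff (Qf_cd hu) 0) x)
  rw [show W2 u = fun y => Sk 1 (R0 u) y - Sk 0 (Qf u) y from rfl, h,
    pd_Sk_other (R0_cd hu) (by decide) x, pd_Sk_self (Qf_cd hu) 0 x,
    Sk_congr (hpdR0 hu hper hdiv) x, Sk_neg, Sk_pd_self (R1_cd hu) 1 x]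
  have : Qf u x = R1 u (Function.update x 1 0) := rfl
  rw [this]
  ring

-- curl identities
lemma curl0 (x : V3) : pd 1 (W2 u) x - pd 2 (W1 u) x = cmp u 0 x := by
  rw [pdW2_1 hu x, pdW1_2 hu x]; ring

lemma curl1 (x : V3) : pd 2 (W0 u) x - pd 0 (W2 u) x = cmp u 1 x := by
  rw [pdW0_2 hu x, pdW2_0 hu hper hdiv x]; ring

lemma curl2 (x : V3) : pd 0 (W1 u) x - pd 1 (W0 u) x = cmp u 2 x := by
  rw [pdW1_0 hu x, pdW0_1 hu x]
  have hcomb : ∀ w, pd 0 (fun y => cmp u 0 y - R0 u y) w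
      = (fun y => -(pd 2 (cmp u 2) y)) w + (fun y => -(pd 1 (fun z => cmp u 1 z - R1 u z) y)) w := by
    intro w
    have e0 : pd 0 (fun y => cmp u 0 y - R0 u y) w = pd 0 (cmp u 0) w - pd 0 (R0 u) w :=
      pd_sub 0 (diffAt (cmp_cd hu 0) w) (diffAt (R0_cd hu) w)
    have e1 : pd 1 (fun z => cmp u 1 z - R1 u z) w = pd 1 (cmp u 1) w - pd 1 (R1 u) w :=
      pd_sub 1 (diffAt (cmp_cd hu 1) w) (diffAt (R1_cd hu) w)
    have e2 := hpdR0 hu hper hdiv w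
    have e3 := hsum012 hu hdiv w
    simp only []
    rw [e0, e1]
    linarith
  rw [Sk_congr hcomb x,
    Sk_add (f := fun y => -(pd 2 (cmp u 2) y)) (g := fun y => -(pd 1 (fun z => cmp u 1 z - R1 u z) y))
      ((pd_contDiff (cmp_cd hu 2) 2).continuous.neg)
      ((pd_contDiff ((cmp_cd hu 1).sub (R1_cd hu)) 1).continuous.neg) x,
    Sk_neg, Sk_neg, Sk_pd_self (cmp_cd hu 2) 2 x]
  have : R2 u x = cmp u 2 (Function.update x 2 0) := rfl
  rw [this]
  ring

end Curl
end Constr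
namespace Constr
variable {u : V3 → V3}

def AA (u : V3 → V3) : V3 → Mat3 := fun x =>
  ![![0, -(W2 u x), W1 u x], ![W2 u x, 0, -(W0 u x)], ![-(W1 u x), W0 u x, 0]]

variable (hu : ContDiff ℝ (⊤:ℕ∞) u) (hper : SpacePeriodic u)
  (hdiv : ∀ x, divV u x = 0) (hmean : (∫ x in cube, u x) = 0)

lemma AA_entry_00 : (fun y => AA u y 0 0) = fun _ => (0:ℝ) := rfl
lemma AA_entry_10 : (fun y => AA u y 1 0) = W2 u := rfl
lemma AA_entry_20 : (fun y => AA u y 2 0) = fun y => -(W1 u y) := rfl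
lemma AA_entry_01 : (fun y => AA u y 0 1) = fun y => -(W2 u y) := rfl
lemma AA_entry_11 : (fun y => AA u y 1 1) = fun _ => (0:ℝ) := rfl
lemma AA_entry_21 : (fun y => AA u y 2 1) = W0 u := rfl
lemma AA_entry_02 : (fun y => AA u y 0 2) = W1 u := rfl
lemma AA_entry_12 : (fun y => AA u y 1 2) = fun y => -(W0 u y) := rfl
lemma AA_entry_22 : (fun y => AA u y 2 2) = fun _ => (0:ℝ) := rfl

include hu in
lemma AA_contDiff : ContDiff ℝ (⊤:ℕ∞) (AA u) := by
  rw [contDiff_pi]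
  intro i
  rw [contDiff_pi]
  intro j
  have h0 := W0_cd hu; have h1 := W1_cd hu; have h2 := W2_cd hu
  fin_cases i <;> fin_cases j <;>
    simp only [AA, Matrix.cons_val_zero, Matrix.cons_val_one, Matrix.head_cons,
      Matrix.cons_val_two, Matrix.tail_cons, Fin.isValue] <;>
    first
      | exact contDiff_const
      | exact h0 | exact h1 | exact h2
      | exact h0.neg | exact h1.neg | exact h2.neg

include hu hper hdiv hmean in
lemma AA_periodic : SpacePeriodic (AA u) := by
  intro x n
  have p0 := W0_per hu hper hdiv hmean x n
  have p1 := W1_per hu hper hdiv hmean x n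
  have p2 := W2_per hu hper hdiv hmean x n
  simp only [AA, p0, p1, p2]

lemma AA_skew (x : V3) (i j : Fin 3) : AA u x i j = - AA u x j i := by
  fin_cases i <;> fin_cases j <;>
    simp [AA]

include hu hper hdiv in
lemma AA_div (x : V3) (i : Fin 3) : divM (AA u) x i = u x i := by
  fin_cases i
  · show divM (AA u) x 0 = u x 0
    rw [divM, Fin.sum_univ_three, AA_entry_00, AA_entry_10, AA_entry_20, pd_const,
      pd_neg]
    have := curl0 hu hper hdiv x
    simp only [cmp] at this
    linarith
  · show divM (AA u) x 1 = u x 1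
    rw [divM, Fin.sum_univ_three, AA_entry_01, AA_entry_11, AA_entry_21, pd_const,
      pd_neg]
    have := curl1 hu hper hdiv x
    simp only [cmp] at this
    linarith
  · show divM (AA u) x 2 = u x 2
    rw [divM, Fin.sum_univ_three, AA_entry_02, AA_entry_12, AA_entry_22, pd_const,
      pd_neg]
    have := curl2 hu hper hdiv x
    simp only [cmp] at this
    linarith

end Constr


/-- Skew-symmetric inverse divergence: every smooth divergence-free
mean-zero vector field `u` on the torus is the divergence of a smooth skew-symmetric
matrix field. -/
theorem skew_symmetric_inverse_divergence
    (u : V3 → V3) (hu : ContDiff ℝ (⊤ : ℕ∞) u) (hper : SpacePeriodic u)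
    (hdiv : ∀ x, divV u x = 0) (hmean : (∫ x in cube, u x) = 0) :
    ∃ A : V3 → Mat3, ContDiff ℝ (⊤ : ℕ∞) A ∧ SpacePeriodic A ∧
      (∀ x, ∀ i j, A x i j = - A x j i) ∧
      (∀ x, ∀ i, divM A x i = u x i) :=
  ⟨Constr.AA u, Constr.AA_contDiff hu, Constr.AA_periodic hu hper hdiv hmean,
    fun x i j => Constr.AA_skew x i j, fun x i => Constr.AA_div hu hper hdiv x i⟩

end
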